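/- Let T : V → W be an invertible linear map between finite-dimensional complex inner product spaces, and for s > 0 let e_s be the orthogonal projection onto the graph of sT. Then e_s → [[0,0],[0,1]] in operator norm as s → ∞. -/

import Mathlib

variable {V W : Type*}
  [NormedAddCommGroup V] [InnerProductSpace ℂ V] [FiniteDimensional ℂ V]
  [NormedAddCommGroup W] [InnerProductSpace ℂ W] [FiniteDimensional ℂ W]

/-- The graph projection of `T`, as a linear map on `V × W`, given by the block matrix
`[[(1+T*T)⁻¹, T*(1+TT*)⁻¹], [T(1+T*T)⁻¹, 1-(1+TT*)⁻¹]]`. -/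
noncomputable def gproj (T : V →ₗ[ℂ] W) : (V × W) →ₗ[ℂ] (V × W) :=
  let A : V →ₗ[ℂ] V := Ring.inverse ((1 : Module.End ℂ V) + LinearMap.adjoint T ∘ₗ T)
  let C : W →ₗ[ℂ] W := Ring.inverse ((1 : Module.End ℂ W) + T ∘ₗ LinearMap.adjoint T)
  LinearMap.prod
    ((A ∘ₗ LinearMap.fst ℂ V W) + ((LinearMap.adjoint T ∘ₗ C) ∘ₗ LinearMap.snd ℂ V W))
    (((T ∘ₗ A) ∘ₗ LinearMap.fst ℂ V W) + ((LinearMap.id - C) ∘ₗ LinearMap.snd ℂ V W))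

/-!
Write `A = (1 + S⋆S)⁻¹` and `C = (1 + SS⋆)⁻¹`. The graph projection of `S` minus the
projection onto `0 ⊕ W` is the block matrix `[[A, S⋆C], [SA, -C]]`. Since
`re ⟪(1 + S⋆S)a, a⟫ = ‖a‖² + ‖Sa‖²`, a lower bound `‖x‖ ≤ K‖Sx‖` gives `‖A‖ ≤ K²` and
`‖SA‖ ≤ K`, and similarly for `S⋆`. An invertible `T` and its adjoint are bounded below by some
`K`, so `sT` and `(sT)⋆` are bounded below with constant `K / s`, and the difference is
`O(1 / s)`.
-/

open LinearMap Filter Topology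

section OneAddAdjointCompSelf

variable {𝕜 E F : Type*} [RCLike 𝕜]
  [NormedAddCommGroup E] [InnerProductSpace 𝕜 E] [FiniteDimensional 𝕜 E]
  [NormedAddCommGroup F] [InnerProductSpace 𝕜 F] [FiniteDimensional 𝕜 F]

lemma re_inner_one_add_adjoint_comp_self_apply (S : E →ₗ[𝕜] F) (x : E) :
    RCLike.re (inner 𝕜 ((1 + adjoint S ∘ₗ S) x) x) = ‖x‖ ^ 2 + ‖S x‖ ^ 2 := by
  simp [inner_add_left, adjoint_inner_left]

lemma isUnit_one_add_adjoint_comp_self (S : E →ₗ[𝕜] F) :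
    IsUnit (1 + adjoint S ∘ₗ S : Module.End 𝕜 E) := by
  have hinj : Function.Injective (1 + adjoint S ∘ₗ S : Module.End 𝕜 E) := by
    refine (injective_iff_map_eq_zero _).2 fun x hx => ?_
    have h := re_inner_one_add_adjoint_comp_self_apply S x
    rw [hx, inner_zero_left, map_zero] at h
    exact norm_eq_zero.1 (by nlinarith [sq_nonneg ‖x‖, sq_nonneg ‖S x‖])
  exact (Module.End.isUnit_iff _).2 ⟨hinj, injective_iff_surjective.1 hinj⟩

lemma sq_norm_add_sq_norm_apply_inverse_le (S : E →ₗ[𝕜] F) (v : E) :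
    ‖Ring.inverse (1 + adjoint S ∘ₗ S) v‖ ^ 2 + ‖S (Ring.inverse (1 + adjoint S ∘ₗ S) v)‖ ^ 2 ≤
      ‖v‖ * ‖Ring.inverse (1 + adjoint S ∘ₗ S) v‖ := by
  set a := Ring.inverse (1 + adjoint S ∘ₗ S) v
  have hv : (1 + adjoint S ∘ₗ S) a = v := by
    rw [← Module.End.mul_apply, Ring.mul_inverse_cancel _ (isUnit_one_add_adjoint_comp_self S),
      Module.End.one_apply]
  rw [← re_inner_one_add_adjoint_comp_self_apply, hv]
  exact (RCLike.re_le_norm _).trans (norm_inner_le_norm v a)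

variable {K : ℝ}

lemma norm_inverse_one_add_adjoint_comp_self_apply_le (S : E →ₗ[𝕜] F)
    (hS : ∀ x, ‖x‖ ≤ K * ‖S x‖) (v : E) :
    ‖Ring.inverse (1 + adjoint S ∘ₗ S) v‖ ≤ K ^ 2 * ‖v‖ := by
  have h := sq_norm_add_sq_norm_apply_inverse_le S v
  set a := Ring.inverse (1 + adjoint S ∘ₗ S) v
  have ha : ‖a‖ ^ 2 ≤ K ^ 2 * ‖S a‖ ^ 2 := by
    rw [← mul_pow]; exact pow_le_pow_left₀ (norm_nonneg a) (hS a) 2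
  have hmul : ‖a‖ * ‖a‖ ≤ K ^ 2 * ‖v‖ * ‖a‖ := by
    nlinarith [mul_le_mul_of_nonneg_left h (sq_nonneg K), sq_nonneg K, sq_nonneg ‖a‖]
  rcases (norm_nonneg a).eq_or_lt with ha0 | ha0
  · rw [← ha0]; positivity
  · exact le_of_mul_le_mul_right hmul ha0

lemma norm_apply_inverse_one_add_adjoint_comp_self_apply_le (S : E →ₗ[𝕜] F) (hK : 0 ≤ K)
    (hS : ∀ x, ‖x‖ ≤ K * ‖S x‖) (v : E) :
    ‖S (Ring.inverse (1 + adjoint S ∘ₗ S) v)‖ ≤ K * ‖v‖ := by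
  have h := sq_norm_add_sq_norm_apply_inverse_le S v
  have ha := norm_inverse_one_add_adjoint_comp_self_apply_le S hS v
  set a := Ring.inverse (1 + adjoint S ∘ₗ S) v
  refine (pow_le_pow_iff_left₀ (norm_nonneg _) (by positivity) two_ne_zero).1 ?_
  calc ‖S a‖ ^ 2 ≤ ‖v‖ * ‖a‖ := by nlinarith [norm_nonneg a]
    _ ≤ ‖v‖ * (K ^ 2 * ‖v‖) := by gcongr
    _ = (K * ‖v‖) ^ 2 := by ring

lemma exists_norm_le_mul_norm_apply_and_adjoint_apply (T : E →ₗ[𝕜] F)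
    (hT : Function.Bijective T) :
    ∃ K : ℝ, 0 ≤ K ∧ (∀ x, ‖x‖ ≤ K * ‖T x‖) ∧ ∀ y, ‖y‖ ≤ K * ‖adjoint T y‖ := by
  have hker : ker (adjoint T) = ⊥ := by
    rw [← orthogonal_range, range_eq_top.2 hT.2, Submodule.top_orthogonal_eq_bot]
  obtain ⟨K₁, -, h₁⟩ := T.exists_antilipschitzWith (ker_eq_bot.2 hT.1)
  obtain ⟨K₂, -, h₂⟩ := (adjoint T).exists_antilipschitzWith hker
  refine ⟨max K₁ K₂, by positivity, fun x => ?_, fun y => ?_⟩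
  · exact (h₁.le_mul_norm (map_zero T) x).trans (by gcongr; exact le_max_left _ _)
  · exact (h₂.le_mul_norm (map_zero _) y).trans (by gcongr; exact le_max_right _ _)

end OneAddAdjointCompSelf

lemma norm_le_div_mul_norm_smul_apply {𝕜 E F : Type*} [RCLike 𝕜]
    [NormedAddCommGroup E] [Module 𝕜 E] [NormedAddCommGroup F] [NormedSpace 𝕜 F]
    (S : E →ₗ[𝕜] F) {K s : ℝ} (hs : 0 < s) (hS : ∀ x, ‖x‖ ≤ K * ‖S x‖) (x : E) :
    ‖x‖ ≤ K / s * ‖((s : 𝕜) • S) x‖ := by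
  rw [LinearMap.smul_apply, norm_smul, RCLike.norm_ofReal, abs_of_pos hs, ← mul_assoc,
    div_mul_cancel₀ _ hs.ne']
  exact hS x

lemma gproj_apply_sub_snd (S : V →ₗ[ℂ] W) (x : V × W) :
    gproj S x - (0, x.2) =
      (Ring.inverse (1 + adjoint S ∘ₗ S) x.1 + adjoint S (Ring.inverse (1 + S ∘ₗ adjoint S) x.2),
        S (Ring.inverse (1 + adjoint S ∘ₗ S) x.1) - Ring.inverse (1 + S ∘ₗ adjoint S) x.2) := by
  ext
  · simp [gproj]
  · simp only [gproj, LinearMap.prod_apply, Function.prod_apply, LinearMap.add_apply, coe_comp,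
      coe_fst, Function.comp_apply, coe_snd, LinearMap.sub_apply, id_coe, id_eq, Prod.mk_sub_mk]
    abel

lemma norm_gproj_sub_le (S : V →ₗ[ℂ] W) {K : ℝ} (hK : 0 ≤ K) (hS : ∀ x, ‖x‖ ≤ K * ‖S x‖)
    (hS' : ∀ y, ‖y‖ ≤ K * ‖adjoint S y‖) :
    ‖(gproj S).toContinuousLinearMap - (prod 0 (snd ℂ V W)).toContinuousLinearMap‖ ≤
      K + K ^ 2 := by
  refine ContinuousLinearMap.opNorm_le_bound _ (by positivity) fun x => ?_
  have hA₁ := norm_inverse_one_add_adjoint_comp_self_apply_le S hS x.1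
  have hA₂ := norm_apply_inverse_one_add_adjoint_comp_self_apply_le S hK hS x.1
  have hC₁ := norm_inverse_one_add_adjoint_comp_self_apply_le (adjoint S) hS' x.2
  have hC₂ := norm_apply_inverse_one_add_adjoint_comp_self_apply_le (adjoint S) hK hS' x.2
  rw [adjoint_adjoint] at hC₁ hC₂
  have h₁ : ‖x.1‖ ≤ ‖x‖ := norm_fst_le x
  have h₂ : ‖x.2‖ ≤ ‖x‖ := norm_snd_le x
  change ‖gproj S x - (0, x.2)‖ ≤ _
  rw [gproj_apply_sub_snd, norm_prod_le_iff]
  constructor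
  · calc _ ≤ _ := norm_add_le _ _
      _ ≤ K ^ 2 * ‖x.1‖ + K * ‖x.2‖ := add_le_add hA₁ hC₂
      _ ≤ (K + K ^ 2) * ‖x‖ := by nlinarith
  · calc _ ≤ _ := norm_sub_le _ _
      _ ≤ K * ‖x.1‖ + K ^ 2 * ‖x.2‖ := add_le_add hA₂ hC₁
      _ ≤ (K + K ^ 2) * ‖x‖ := by nlinarith

lemma norm_gproj_ofReal_smul_sub_le (T : V →ₗ[ℂ] W) {K s : ℝ} (hK : 0 ≤ K) (hs : 0 < s)
    (hT : ∀ x, ‖x‖ ≤ K * ‖T x‖) (hT' : ∀ y, ‖y‖ ≤ K * ‖adjoint T y‖) :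
    ‖(gproj ((s : ℂ) • T)).toContinuousLinearMap - (prod 0 (snd ℂ V W)).toContinuousLinearMap‖ ≤
      K / s + (K / s) ^ 2 := by
  have hadj : adjoint ((s : ℂ) • T) = (s : ℂ) • adjoint T := by rw [map_smulₛₗ, Complex.conj_ofReal]
  refine norm_gproj_sub_le _ (by positivity) (norm_le_div_mul_norm_smul_apply T hs hT) ?_
  rw [hadj]
  exact norm_le_div_mul_norm_smul_apply _ hs hT'

/-- If `T` is invertible, then as `s → ∞` the graph projections of `sT` converge in
operator norm to the projection `[[0,0],[0,1]]` onto `0 ⊕ W`. -/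
theorem graph_projection_tendsto_vertical_of_invertible (T : V →ₗ[ℂ] W)
    (hT : Function.Bijective T) :
    Filter.Tendsto
      (fun s : ℝ => LinearMap.toContinuousLinearMap (gproj ((s : ℂ) • T)))
      Filter.atTop
      (nhds (LinearMap.toContinuousLinearMap
        (LinearMap.prod (0 : (V × W) →ₗ[ℂ] V) (LinearMap.snd ℂ V W)))) := by
  obtain ⟨K, hK, hT₁, hT₂⟩ := exists_norm_le_mul_norm_apply_and_adjoint_apply T hT
  have hK_div : Tendsto (fun s : ℝ => K / s) atTop (𝓝 0) :=
    tendsto_const_nhds.div_atTop tendsto_id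
  refine (tendsto_iff_norm_sub_tendsto_zero (E := (V × W) →L[ℂ] (V × W))).2 ?_
  refine squeeze_zero' (.of_forall fun _ => by positivity) ?_
    (by simpa using hK_div.add (hK_div.pow 2))
  filter_upwards [eventually_gt_atTop 0] with s hs
  exact norm_gproj_ofReal_smul_sub_le T hK hs hT₁ hT₂
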